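/- arXiv:2601.08775 — 2 statements merged into one kernel-verified Lean document; each statement's English description precedes it below -/
import Mathlib

section
/- Let x ∈ ℂ^d and Z̄ ∈ ℂ^{d×(r−1)}, and set Z = [x, (I_d + x x*)^{1/2} Z̄] ∈ ℂ^{d×r}. Then det(I_d + Z Z*) = (1 + ‖x‖²) · det(I_d + Z̄ Z̄*). -/
open Matrix
open scoped ComplexOrder

theorem stmt_9 (d r : ℕ) (x : Fin d → ℂ) (Zb : Matrix (Fin d) (Fin (r - 1)) ℂ)
    (S : Matrix (Fin d) (Fin d) ℂ) (hS : S.PosSemidef)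
    (hS2 : S * S = 1 + Matrix.vecMulVec x (star x))
    (Z : Matrix (Fin d) (Fin 1 ⊕ Fin (r - 1)) ℂ)
    (hZ : Z = Matrix.of fun i j =>
      Sum.elim (fun _ : Fin 1 => x i) (fun k => (S * Zb) i k) j) :
    ((1 : Matrix (Fin d) (Fin d) ℂ) + Z * Zᴴ).det =
      (((1 + ∑ i, ‖x i‖ ^ 2 : ℝ)) : ℂ) *
        ((1 : Matrix (Fin d) (Fin d) ℂ) + Zb * Zbᴴ).det := by
  have hSH : Sᴴ = S := hS.1
  have hZZ : Z * Zᴴ = Matrix.vecMulVec x (star x) + S * Zb * Zbᴴ * S := by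
    have h1 : Z * Zᴴ = Matrix.vecMulVec x (star x) + (S * Zb) * (S * Zb)ᴴ := by
      ext i j
      simp [hZ, Matrix.mul_apply, Fintype.sum_sum_type, Matrix.vecMulVec_apply,
        Matrix.conjTranspose_apply, mul_comm]
    rw [h1, Matrix.conjTranspose_mul, hSH]
    simp [Matrix.mul_assoc]
  have key : (1 : Matrix (Fin d) (Fin d) ℂ) + Z * Zᴴ
      = S * ((1 : Matrix (Fin d) (Fin d) ℂ) + Zb * Zbᴴ) * S := by
    rw [hZZ, Matrix.mul_add, Matrix.add_mul, Matrix.mul_one, hS2]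
    simp [Matrix.mul_assoc, add_assoc]
  have hdet1 : ((1 : Matrix (Fin d) (Fin d) ℂ) + Matrix.vecMulVec x (star x)).det
      = (((1 + ∑ i, ‖x i‖ ^ 2 : ℝ)) : ℂ) := by
    have : Matrix.vecMulVec x (star x) = Matrix.replicateCol (Fin 1) x * Matrix.replicateRow (Fin 1) (star x) := by
      ext i j; simp [Matrix.vecMulVec_apply, Matrix.mul_apply]
    erw [this, Matrix.det_one_add_replicateCol_mul_replicateRow (ι := Fin 1)]
    push_cast
    simp [dotProduct, mul_comm, Complex.mul_conj, ← Complex.ofReal_pow, Complex.sq_norm]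
  rw [key, Matrix.det_mul, Matrix.det_mul, mul_comm, ← mul_assoc, ← Matrix.det_mul, hS2,
    hdet1]
end

section
/- Let Y, Ȳ ∈ ℂ^{d×r}, θ > 0, A := (θ² I_d + Y Y*)^{-1/2}, B := θ² I_d + (Y − Ȳ)(Y − Ȳ)*, and let u be a unit-norm eigenvector of the Hermitian matrix A B A with eigenvalue λ. Then λ ≤ (1 + ‖Ȳ* A u‖)². -/
open Matrix
open scoped ComplexOrder

/-- Euclidean norm of a complex vector. -/
noncomputable def vnorm {n : Type*} [Fintype n] (v : n → ℂ) : ℝ :=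
  Real.sqrt (∑ i, ‖v i‖ ^ 2)

lemma vnorm_nonneg {n : Type*} [Fintype n] (v : n → ℂ) : 0 ≤ vnorm v :=
  Real.sqrt_nonneg _

lemma vnorm_eq_norm {n : Type*} [Fintype n] (v : n → ℂ) :
    vnorm v = ‖(WithLp.equiv 2 (n → ℂ)).symm v‖ := by
  rw [EuclideanSpace.norm_eq]; rfl

lemma vnorm_sub_le {n : Type*} [Fintype n] (v w : n → ℂ) :
    vnorm (v - w) ≤ vnorm v + vnorm w := by
  simp only [vnorm_eq_norm]
  have : (WithLp.equiv 2 (n → ℂ)).symm (v - w)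
      = (WithLp.equiv 2 (n → ℂ)).symm v - (WithLp.equiv 2 (n → ℂ)).symm w := rfl
  rw [this]
  exact norm_sub_le _ _

lemma star_dot_self {n : Type*} [Fintype n] (v : n → ℂ) :
    star v ⬝ᵥ v = ((vnorm v ^ 2 : ℝ) : ℂ) := by
  have h : (0:ℝ) ≤ ∑ i, ‖v i‖ ^ 2 :=
    Finset.sum_nonneg fun i _ => sq_nonneg _
  rw [vnorm, Real.sq_sqrt h]
  simp only [dotProduct, Pi.star_apply, Complex.ofReal_sum]
  refine Finset.sum_congr rfl fun i _ => ?_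
  rw [Complex.star_def, Complex.conj_mul']
  norm_cast

lemma dot_sandwich {d r : ℕ} (C : Matrix (Fin d) (Fin r) ℂ) (x : Fin d → ℂ) :
    star x ⬝ᵥ ((C * Cᴴ) *ᵥ x) = ((vnorm (Cᴴ *ᵥ x) ^ 2 : ℝ) : ℂ) := by
  rw [← mulVec_mulVec, dotProduct_mulVec, ← star_dot_self (Cᴴ *ᵥ x), star_mulVec,
    conjTranspose_conjTranspose]

theorem stmt_12 (d r : ℕ) (θ : ℝ) (hθ : 0 < θ)
    (Y Yb : Matrix (Fin d) (Fin r) ℂ)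
    (A : Matrix (Fin d) (Fin d) ℂ) (hA1 : A.PosSemidef)
    (hA2 : A * A * (((θ : ℂ) ^ 2) • (1 : Matrix (Fin d) (Fin d) ℂ) + Y * Yᴴ) = 1)
    (B : Matrix (Fin d) (Fin d) ℂ)
    (hB : B = ((θ : ℂ) ^ 2) • (1 : Matrix (Fin d) (Fin d) ℂ) + (Y - Yb) * (Y - Yb)ᴴ)
    (u : Fin d → ℂ) (hu : vnorm u = 1) (l : ℝ)
    (heig : (A * B * A) *ᵥ u = (l : ℂ) • u) :
    l ≤ (1 + vnorm (Ybᴴ *ᵥ (A *ᵥ u))) ^ 2 := by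
  set M : Matrix (Fin d) (Fin d) ℂ :=
    ((θ : ℂ) ^ 2) • (1 : Matrix (Fin d) (Fin d) ℂ) + Y * Yᴴ with hM
  have hAH : Aᴴ = A := hA1.isHermitian
  -- A * M * A = 1
  have hAMA : A * M * A = 1 := by
    have h1 : A * (A * M) = 1 := by rw [← mul_assoc]; exact hA2
    have h2 : (A * M) * A = 1 := mul_eq_one_comm.mp h1
    rwa [mul_assoc] at h2 ⊢
  set v : Fin d → ℂ := A *ᵥ u with hv
  -- star u ⬝ᵥ (A *ᵥ w) = star v ⬝ᵥ w
  have hAu : ∀ w : Fin d → ℂ, star u ⬝ᵥ (A *ᵥ w) = star v ⬝ᵥ w := by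
    intro w
    rw [dotProduct_mulVec, hv, star_mulVec, hAH]
  have hu2 : star u ⬝ᵥ u = 1 := by
    rw [star_dot_self, hu]; norm_num
  -- general sandwich: for N, star u ⬝ᵥ ((A * N * A) *ᵥ u) = star v ⬝ᵥ (N *ᵥ v)
  have hsand : ∀ N : Matrix (Fin d) (Fin d) ℂ,
      star u ⬝ᵥ ((A * N * A) *ᵥ u) = star v ⬝ᵥ (N *ᵥ v) := by
    intro N
    rw [← mulVec_mulVec, ← mulVec_mulVec, hAu, dotProduct_mulVec, dotProduct_mulVec,
      hv, star_mulVec, hAH]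
  set a : ℝ := vnorm ((Y - Yb)ᴴ *ᵥ v) with ha
  set b : ℝ := vnorm (Yᴴ *ᵥ v) with hbdef
  set c : ℝ := vnorm (Ybᴴ *ᵥ v) with hc
  set nv : ℝ := vnorm v with hnv
  -- expand star v ⬝ᵥ (N *ᵥ v) for N = θ²•1 + C*Cᴴ
  have hexpand : ∀ C : Matrix (Fin d) (Fin r) ℂ,
      star v ⬝ᵥ ((((θ : ℂ) ^ 2) • (1 : Matrix (Fin d) (Fin d) ℂ) + C * Cᴴ) *ᵥ v)
        = ((θ ^ 2 * nv ^ 2 + vnorm (Cᴴ *ᵥ v) ^ 2 : ℝ) : ℂ) := by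
    intro C
    rw [add_mulVec, dotProduct_add, smul_mulVec, one_mulVec, dotProduct_smul,
      star_dot_self, dot_sandwich]
    rw [smul_eq_mul]
    push_cast
    ring
  -- equation for l
  have hl : (l : ℂ) = ((θ ^ 2 * nv ^ 2 + a ^ 2 : ℝ) : ℂ) := by
    have := congrArg (fun w => star u ⬝ᵥ w) heig
    simp only [dotProduct_smul] at this
    rw [hu2, smul_eq_mul, mul_one] at this
    rw [← this, hB, hsand, hexpand]
  -- equation for 1
  have h1eq : (1 : ℂ) = ((θ ^ 2 * nv ^ 2 + b ^ 2 : ℝ) : ℂ) := by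
    have := hsand M
    rw [hAMA, one_mulVec, hu2] at this
    rw [this, hM, hexpand]
  have hlr : l = θ ^ 2 * nv ^ 2 + a ^ 2 := by exact_mod_cast hl
  have h1r : (1 : ℝ) = θ ^ 2 * nv ^ 2 + b ^ 2 := by exact_mod_cast h1eq
  -- triangle inequality: a ≤ b + c
  have htri : a ≤ b + c := by
    have : (Y - Yb)ᴴ *ᵥ v = Yᴴ *ᵥ v - Ybᴴ *ᵥ v := by
      rw [conjTranspose_sub, sub_mulVec]
    rw [ha, this]
    exact vnorm_sub_le _ _
  have ha0 : 0 ≤ a := vnorm_nonneg _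
  have hb0 : 0 ≤ b := vnorm_nonneg _
  have hc0 : 0 ≤ c := vnorm_nonneg _
  have hb1 : b ≤ 1 := by nlinarith [sq_nonneg θ, sq_nonneg nv, mul_nonneg (sq_nonneg θ) (sq_nonneg nv)]
  nlinarith [sq_nonneg (b + c - a), mul_nonneg hc0 (sub_nonneg.mpr hb1)]
end
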